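/- Let α be a real number with α ≠ 1, let k ≥ 2, and let b_1, …, b_k ∈ M_N(ℂ). Then X_{α,k}[ b_1 ⊗ ⋯ ⊗ b_{k−1} ⊗ (b_k·h − h·b_k) ] = (1/(1−α)) · ( X_{α−1,k−1}[ b_1 ⊗ ⋯ ⊗ b_{k−2} ⊗ (b_{k−1}·b_k) ] − X_{α−1,k−1}[ b_1 ⊗ ⋯ ⊗ b_{k−1} ] · b_k ). -/

import Mathlib

open MeasureTheory
open scoped ComplexOrder

noncomputable section

/-- `N × N` complex matrices. -/
abbrev Mat (N : ℕ) := Matrix (Fin N) (Fin N) ℂ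

/-- The simplex `Δ_k = {s ∈ ℝ^k : 0 ≤ s_k ≤ … ≤ s_1 ≤ 1}`, with zero-based
coordinates: `s i` is `s_{i+1}`. -/
def simplexSet (k : ℕ) : Set (Fin k → ℝ) :=
  {s | (∀ i : Fin k, 0 ≤ s i ∧ s i ≤ 1) ∧ ∀ i j : Fin k, i ≤ j → s j ≤ s i}

/-- Extension of `s ∈ Δ_k` by the conventions `s_0 := 1` and `s_j := 0` for `j ≥ k+1`. -/
def sext (k : ℕ) (s : Fin k → ℝ) (j : ℕ) : ℝ :=
  if j = 0 then 1 else if h : j - 1 < k then s ⟨j - 1, h⟩ else 0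

/-- The weight `Σ_{ℓ=0}^{k} (s_ℓ − s_{ℓ+1}) r_ℓ`. -/
def wsum (k : ℕ) (s : Fin k → ℝ) (r : ℕ → ℝ) : ℝ :=
  ∑ ℓ ∈ Finset.range (k + 1), (sext k s ℓ - sext k s (ℓ + 1)) * r ℓ

/-- The universal spectral function
`I_{α,k}(r_0,…,r_k) = ∫_{Δ_k} (Σ_ℓ (s_ℓ−s_{ℓ+1}) r_ℓ)^{−α} ds`. -/
def Ifun (α : ℝ) (k : ℕ) (r : ℕ → ℝ) : ℝ :=
  ∫ s in simplexSet k, (wsum k s r) ^ (-α)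

/-- The tuple of spectral values `(λ_{i_0}, …, λ_{i_m})` determined by
`idx : Fin (m+1) → Fin N`, extended by the irrelevant filler value `1`. -/
def lamOf (N m : ℕ) (lam : Fin N → ℝ) (idx : Fin (m + 1) → Fin N) (j : ℕ) : ℝ :=
  if hj : j < m + 1 then lam (idx ⟨j, hj⟩) else 1

/-- The ordered product `P_{i_0} b_1 P_{i_1} b_2 ⋯ b_k P_{i_k}` (the entries of the
tensor argument being `b 1, …, b k`). -/
def chain (N k : ℕ) (P : Fin N → Mat N) (b : ℕ → Mat N)
    (idx : Fin (k + 1) → Fin N) : Mat N :=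
  P (idx 0) * (List.ofFn fun j : Fin k => b (j.1 + 1) * P (idx j.succ)).prod

/-- The operator `X_{α,k}` applied to `b_1 ⊗ ⋯ ⊗ b_k` (encoded as `b : ℕ → Mat N`,
only the values `b 1, …, b k` being relevant):
`X_{α,k}[b_1 ⊗ ⋯ ⊗ b_k] = Σ_{i_0,…,i_k} I_{α,k}(λ_{i_0},…,λ_{i_k}) P_{i_0} b_1 P_{i_1} ⋯ b_k P_{i_k}`. -/
def Xop (N : ℕ) (lam : Fin N → ℝ) (P : Fin N → Mat N) (α : ℝ) (k : ℕ)
    (b : ℕ → Mat N) : Mat N :=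
  ∑ idx : Fin (k + 1) → Fin N, Ifun α k (lamOf N k lam idx) • chain N k P b idx

/-- The rank-one projection `P_i = v_i v_i^*`. -/
def projOf (N : ℕ) (v : Fin N → Fin N → ℂ) (i : Fin N) : Mat N :=
  Matrix.of fun a b => v i a * (starRingEnd ℂ) (v i b)

/-- `h^β = Σ_i λ_i^β P_i`. -/
def hpow (N : ℕ) (lam : Fin N → ℝ) (P : Fin N → Mat N) (β : ℝ) : Mat N :=
  ∑ i, (lam i ^ β : ℝ) • P i

lemma isClosed_simplexSet (k : ℕ) : IsClosed (simplexSet k) := by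
  have h1 : simplexSet k = (⋂ i : Fin k, {s : Fin k → ℝ | 0 ≤ s i} ∩ {s | s i ≤ 1}) ∩
      (⋂ i : Fin k, ⋂ j : Fin k, ⋂ _ : i ≤ j, {s : Fin k → ℝ | s j ≤ s i}) := by
    ext s; simp [simplexSet]
  rw [h1]
  apply IsClosed.inter
  · exact isClosed_iInter fun i => (isClosed_le continuous_const (continuous_apply i)).inter
      (isClosed_le (continuous_apply i) continuous_const)
  · exact isClosed_iInter fun i => isClosed_iInter fun j => isClosed_iInter fun _ =>
      isClosed_le (continuous_apply j) (continuous_apply i)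

lemma isCompact_simplexSet (k : ℕ) : IsCompact (simplexSet k) := by
  have hsub : simplexSet k ⊆ Set.Icc 0 1 := by
    intro s hs
    constructor
    · intro i; exact (hs.1 i).1
    · intro i; exact (hs.1 i).2
  exact (isCompact_Icc).of_isClosed_subset (isClosed_simplexSet k) hsub

lemma measurableSet_simplexSet (k : ℕ) : MeasurableSet (simplexSet k) :=
  (isClosed_simplexSet k).measurableSet

lemma sext_zero (k : ℕ) (s : Fin k → ℝ) : sext k s 0 = 1 := by simp [sext]

lemma sext_of_gt (k : ℕ) (s : Fin k → ℝ) {j : ℕ} (hj : k < j) : sext k s j = 0 := by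
  simp only [sext]
  rw [if_neg (by omega), dif_neg (by omega)]

lemma sext_succ_le {k : ℕ} {s : Fin k → ℝ} (hs : s ∈ simplexSet k) (ℓ : ℕ) :
    sext k s (ℓ + 1) ≤ sext k s ℓ := by
  unfold sext
  rcases Nat.eq_zero_or_pos ℓ with h0 | hpos
  · subst h0
    rw [if_neg (by omega), if_pos rfl]
    split_ifs with hh
    · exact (hs.1 _).2
    · norm_num
  · rw [if_neg (by omega), if_neg (by omega)]
    by_cases h1 : ℓ + 1 - 1 < k
    · rw [dif_pos h1, dif_pos (show ℓ - 1 < k by omega)]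
      exact hs.2 ⟨ℓ - 1, by omega⟩ ⟨ℓ + 1 - 1, h1⟩ (by simp only [Fin.le_def]; omega)
    · rw [dif_neg h1]
      split_ifs with h2
      · exact (hs.1 _).1
      · exact le_refl 0

lemma sum_coeff {k : ℕ} (s : Fin k → ℝ) :
    ∑ ℓ ∈ Finset.range (k + 1), (sext k s ℓ - sext k s (ℓ + 1)) = 1 := by
  rw [Finset.sum_range_sub']
  rw [sext_zero, sext_of_gt k s (by omega)]
  ring

lemma le_wsum {k : ℕ} {s : Fin k → ℝ} (hs : s ∈ simplexSet k) {r : ℕ → ℝ} {a : ℝ}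
    (ha : ∀ ℓ, ℓ ≤ k → a ≤ r ℓ) : a ≤ wsum k s r := by
  have h1 : wsum k s r - a = ∑ ℓ ∈ Finset.range (k + 1),
      (sext k s ℓ - sext k s (ℓ + 1)) * (r ℓ - a) := by
    calc wsum k s r - a
        = (∑ ℓ ∈ Finset.range (k + 1), (sext k s ℓ - sext k s (ℓ + 1)) * r ℓ)
          - a * (∑ ℓ ∈ Finset.range (k + 1), (sext k s ℓ - sext k s (ℓ + 1))) := by
          rw [sum_coeff, mul_one]; rfl
      _ = _ := by
          rw [Finset.mul_sum, ← Finset.sum_sub_distrib]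
          exact Finset.sum_congr rfl fun ℓ _ => by ring
  have h2 : 0 ≤ wsum k s r - a := by
    rw [h1]
    refine Finset.sum_nonneg fun ℓ hℓ => mul_nonneg (sub_nonneg.2 (sext_succ_le hs ℓ))
      (sub_nonneg.2 (ha ℓ (by simpa using Nat.lt_succ_iff.mp (Finset.mem_range.mp hℓ))))
  linarith

lemma wsum_pos {k : ℕ} {s : Fin k → ℝ} (hs : s ∈ simplexSet k) {r : ℕ → ℝ}
    (hr : ∀ ℓ, 0 < r ℓ) : 0 < wsum k s r := by
  set a := (Finset.range (k + 1)).inf' (by simp) r with ha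
  have h0 : 0 < a := by
    rw [ha, Finset.lt_inf'_iff]
    exact fun i _ => hr i
  have h1 : a ≤ wsum k s r :=
    le_wsum hs fun ℓ hℓ => Finset.inf'_le r (Finset.mem_range.mpr (by omega))
  linarith

lemma continuous_sext (k : ℕ) (j : ℕ) : Continuous (fun s : Fin k → ℝ => sext k s j) := by
  unfold sext
  split_ifs <;> first
    | exact continuous_const
    | exact continuous_apply _

lemma continuous_wsum (k : ℕ) (r : ℕ → ℝ) : Continuous (fun s => wsum k s r) := by
  unfold wsum
  exact continuous_finset_sum _ fun ℓ _ =>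
    (((continuous_sext k ℓ).sub (continuous_sext k (ℓ + 1))).mul continuous_const)

lemma integrableOn_wsum_rpow (k : ℕ) (α : ℝ) {r : ℕ → ℝ} (hr : ∀ ℓ, 0 < r ℓ) :
    IntegrableOn (fun s => wsum k s r ^ (-α)) (simplexSet k) := by
  apply ContinuousOn.integrableOn_compact (isCompact_simplexSet k)
  apply ContinuousOn.rpow_const ((continuous_wsum k r).continuousOn)
  exact fun s hs => Or.inl (wsum_pos hs hr).ne'

lemma sext_snoc_le {m : ℕ} (s : Fin (m + 1) → ℝ) (t : ℝ) {j : ℕ} (hj : j ≤ m + 1) :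
    sext (m + 2) (Fin.snoc s t) j = sext (m + 1) s j := by
  unfold sext
  rcases Nat.eq_zero_or_pos j with h0 | hpos
  · simp [h0]
  · rw [if_neg (by omega), if_neg (by omega), dif_pos (show j - 1 < m + 2 by omega),
      dif_pos (show j - 1 < m + 1 by omega)]
    have : (⟨j - 1, show j - 1 < m + 2 by omega⟩ : Fin (m + 2))
        = Fin.castSucc ⟨j - 1, show j - 1 < m + 1 by omega⟩ := rfl
    rw [this, Fin.snoc_castSucc]

lemma sext_snoc_top {m : ℕ} (s : Fin (m + 1) → ℝ) (t : ℝ) :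
    sext (m + 2) (Fin.snoc s t) (m + 2) = t := by
  unfold sext
  rw [if_neg (by omega), dif_pos (show m + 2 - 1 < m + 2 by omega)]
  have : (⟨m + 2 - 1, show m + 2 - 1 < m + 2 by omega⟩ : Fin (m + 2)) = Fin.last (m + 1) := rfl
  rw [this, Fin.snoc_last]

lemma wsum_snoc {m : ℕ} (s : Fin (m + 1) → ℝ) (t : ℝ) (r : ℕ → ℝ) :
    wsum (m + 2) (Fin.snoc s t) r = wsum (m + 1) s r + t * (r (m + 2) - r (m + 1)) := by
  have A1 : sext (m + 2) (Fin.snoc s t) (m + 1) = sext (m + 1) s (m + 1) :=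
    sext_snoc_le s t (by omega)
  have A2 : sext (m + 2) (Fin.snoc s t) (m + 2) = t := sext_snoc_top s t
  have A3 : sext (m + 2) (Fin.snoc s t) (m + 3) = 0 := sext_of_gt _ _ (by omega)
  have A4 : sext (m + 1) s (m + 2) = 0 := sext_of_gt _ _ (by omega)
  have h1 : ∑ ℓ ∈ Finset.range (m + 1),
      (sext (m + 2) (Fin.snoc s t) ℓ - sext (m + 2) (Fin.snoc s t) (ℓ + 1)) * r ℓ
      = ∑ ℓ ∈ Finset.range (m + 1), (sext (m + 1) s ℓ - sext (m + 1) s (ℓ + 1)) * r ℓ := by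
    refine Finset.sum_congr rfl fun ℓ hℓ => ?_
    have hℓ' := Finset.mem_range.mp hℓ
    rw [sext_snoc_le s t (by omega), sext_snoc_le s t (by omega)]
  unfold wsum
  rw [show m + 2 + 1 = (m + 1) + 1 + 1 from rfl, Finset.sum_range_succ, Finset.sum_range_succ,
    Finset.sum_range_succ (f := fun ℓ => (sext (m + 1) s ℓ - sext (m + 1) s (ℓ + 1)) * r ℓ), h1]
  have A2' : sext (m + 2) (Fin.snoc s t) (m + 1 + 1) = t := A2
  have A3' : sext (m + 2) (Fin.snoc s t) (m + 2 + 1) = 0 := A3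
  have A4' : sext (m + 1) s (m + 1 + 1) = 0 := A4
  rw [A1, A2', A3', A4']
  ring

lemma wsum_update {m : ℕ} (s : Fin (m + 1) → ℝ) (r : ℕ → ℝ) (x : ℝ) :
    wsum (m + 1) s (Function.update r (m + 1) x)
      = wsum (m + 1) s r + sext (m + 1) s (m + 1) * (x - r (m + 1)) := by
  have A4 : sext (m + 1) s (m + 2) = 0 := sext_of_gt _ _ (by omega)
  have h1 : ∑ ℓ ∈ Finset.range (m + 1),
      (sext (m + 1) s ℓ - sext (m + 1) s (ℓ + 1)) * Function.update r (m + 1) x ℓ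
      = ∑ ℓ ∈ Finset.range (m + 1), (sext (m + 1) s ℓ - sext (m + 1) s (ℓ + 1)) * r ℓ := by
    refine Finset.sum_congr rfl fun ℓ hℓ => ?_
    have hℓ' := Finset.mem_range.mp hℓ
    rw [Function.update_of_ne (by omega)]
  unfold wsum
  rw [Finset.sum_range_succ,
    Finset.sum_range_succ (f := fun ℓ => (sext (m + 1) s ℓ - sext (m + 1) s (ℓ + 1)) * r ℓ), h1]
  have A4' : sext (m + 1) s (m + 1 + 1) = 0 := A4
  rw [A4', Function.update_self]
  ring

lemma snoc_mem_simplex_iff {m : ℕ} (s : Fin (m + 1) → ℝ) (t : ℝ) :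
    Fin.snoc s t ∈ simplexSet (m + 2)
      ↔ s ∈ simplexSet (m + 1) ∧ t ∈ Set.Icc 0 (s (Fin.last m)) := by
  constructor
  · intro hs
    refine ⟨⟨fun i => by simpa using hs.1 i.castSucc, fun i j hij => ?_⟩, ?_, ?_⟩
    · have := hs.2 i.castSucc j.castSucc
        (by simp only [Fin.castSucc_le_castSucc_iff]; exact hij)
      simpa using this
    · have := (hs.1 (Fin.last (m + 1))).1
      simpa using this
    · have := hs.2 (Fin.castSucc (Fin.last m)) (Fin.last (m + 1))
        (by simp only [Fin.le_def, Fin.coe_castSucc, Fin.val_last]; omega)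
      simpa using this
  · rintro ⟨hs, ht0, ht1⟩
    constructor
    · intro i
      refine Fin.lastCases ?_ (fun i => ?_) i
      · simp only [Fin.snoc_last]
        exact ⟨ht0, le_trans ht1 (hs.1 _).2⟩
      · simpa using hs.1 i
    · intro i j
      revert i
      refine Fin.lastCases ?_ (fun j' => ?_) j
      · intro i _
        simp only [Fin.snoc_last]
        refine Fin.lastCases ?_ (fun i' => ?_) i
        · simp
        · simp only [Fin.snoc_castSucc]
          exact le_trans ht1 (hs.2 i' (Fin.last m) (Fin.le_last i'))
      · intro i hij'
        have hival : (i : ℕ) ≤ (j' : ℕ) := Fin.le_def.mp hij'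
        have hilt : (i : ℕ) < m + 1 := by
          have := j'.isLt; omega
        have heq : i = Fin.castSucc ⟨(i : ℕ), hilt⟩ := by ext; simp
        rw [heq]
        simp only [Fin.snoc_castSucc]
        exact hs.2 ⟨(i : ℕ), hilt⟩ j' (by simp only [Fin.le_def]; exact hival)

lemma inner_eval {A d c α : ℝ} (hα : α ≠ 1) (hd : d ≠ 0) (hc : 0 ≤ c)
    (hpos : ∀ t ∈ Set.Icc 0 c, 0 < A + t * d) :
    ∫ t in Set.Icc 0 c, (A + t * d) ^ (-α)
      = ((A + c * d) ^ (1 - α) - A ^ (1 - α)) / ((1 - α) * d) := by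
  have h1α : (1 : ℝ) - α ≠ 0 := sub_ne_zero.mpr (Ne.symm hα)
  have huIcc : Set.uIcc 0 c = Set.Icc 0 c := Set.uIcc_of_le hc
  have hderiv : ∀ t ∈ Set.uIcc 0 c,
      HasDerivAt (fun t => (A + t * d) ^ (1 - α) / ((1 - α) * d)) ((A + t * d) ^ (-α)) t := by
    intro t ht
    rw [huIcc] at ht
    have h1 : HasDerivAt (fun t : ℝ => A + t * d) d t := by
      simpa using ((hasDerivAt_id t).mul_const d).const_add A
    have h2 : HasDerivAt (fun x : ℝ => x ^ (1 - α))
        ((1 - α) * (A + t * d) ^ (1 - α - 1)) (A + t * d) :=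
      Real.hasDerivAt_rpow_const (Or.inl (hpos t ht).ne')
    have h3 := (h2.comp t h1).div_const ((1 - α) * d)
    refine h3.congr_deriv ?_
    rw [show (1 : ℝ) - α - 1 = -α by ring]
    field_simp
  have hint : IntervalIntegrable (fun t => (A + t * d) ^ (-α)) volume 0 c := by
    apply ContinuousOn.intervalIntegrable
    apply ContinuousOn.rpow_const
    · exact (continuous_const.add (continuous_id.mul continuous_const)).continuousOn
    · intro t ht
      rw [huIcc] at ht
      exact Or.inl (hpos t ht).ne'
  have := intervalIntegral.integral_eq_sub_of_hasDerivAt hderiv hint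
  rw [intervalIntegral.integral_of_le hc] at this
  rw [MeasureTheory.integral_Icc_eq_integral_Ioc, this]
  rw [zero_mul, add_zero]
  ring

lemma integral_simplex_snoc (m : ℕ) (f : (Fin (m + 2) → ℝ) → ℝ)
    (hf : IntegrableOn f (simplexSet (m + 2))) :
    ∫ s in simplexSet (m + 2), f s
      = ∫ s in simplexSet (m + 1), ∫ t in Set.Icc 0 (s (Fin.last m)), f (Fin.snoc s t) := by
  set e := MeasurableEquiv.piFinSuccAbove (fun _ : Fin (m + 2) => ℝ) (Fin.last (m + 1)) with he
  have hmp : MeasurePreserving e volume volume :=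
    volume_preserving_piFinSuccAbove (fun _ : Fin (m + 2) => ℝ) (Fin.last (m + 1))
  have hmps : MeasurePreserving e.symm volume volume := hmp.symm e
  have hsnoc : ∀ (t : ℝ) (s : Fin (m + 1) → ℝ), e.symm (t, s) = Fin.snoc s t := by
    intro t s
    simp only [he, MeasurableEquiv.piFinSuccAbove_symm_apply]
    exact Fin.insertNth_last' t s
  set S := e.symm ⁻¹' (simplexSet (m + 2)) with hS
  set F : ℝ × (Fin (m + 1) → ℝ) → ℝ := fun p => f (e.symm p) with hF
  have hSmeas : MeasurableSet S :=
    e.symm.measurable (measurableSet_simplexSet (m + 2))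
  have hSmem : ∀ (t : ℝ) (s : Fin (m + 1) → ℝ),
      (t, s) ∈ S ↔ s ∈ simplexSet (m + 1) ∧ t ∈ Set.Icc 0 (s (Fin.last m)) := by
    intro t s
    rw [hS, Set.mem_preimage, hsnoc, snoc_mem_simplex_iff]
  have hint : IntegrableOn F S volume := by
    have h1 := hmps.restrict_preimage_emb e.symm.measurableEmbedding (simplexSet (m + 2))
    exact (h1.integrable_comp_emb e.symm.measurableEmbedding).mpr hf
  have step1 : ∫ s in simplexSet (m + 2), f s = ∫ p in S, F p :=
    (hmps.setIntegral_preimage_emb e.symm.measurableEmbedding f _).symm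
  rw [step1, ← MeasureTheory.integral_indicator hSmeas]
  have hprod : (volume : Measure (ℝ × (Fin (m + 1) → ℝ))) = volume.prod volume :=
    Measure.volume_eq_prod _ _
  have hint2 : Integrable (S.indicator F) (volume.prod volume) := by
    rw [← hprod]
    exact (integrable_indicator_iff hSmeas).mpr hint
  rw [hprod, MeasureTheory.integral_prod_symm _ hint2]
  have hinner : ∀ s : Fin (m + 1) → ℝ,
      (∫ t, S.indicator F (t, s))
        = (simplexSet (m + 1)).indicator
            (fun s => ∫ t in Set.Icc 0 (s (Fin.last m)), f (Fin.snoc s t)) s := by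
    intro s
    by_cases hs : s ∈ simplexSet (m + 1)
    · rw [Set.indicator_of_mem hs]
      have heqf : (fun t => S.indicator F (t, s))
          = (Set.Icc 0 (s (Fin.last m))).indicator (fun t => f (Fin.snoc s t)) := by
        funext t
        by_cases ht : t ∈ Set.Icc 0 (s (Fin.last m))
        · rw [Set.indicator_of_mem ((hSmem t s).mpr ⟨hs, ht⟩),
            Set.indicator_of_mem ht, hF]
          simp only [hsnoc]
        · rw [Set.indicator_of_notMem (fun hmem => ht ((hSmem t s).mp hmem).2),
            Set.indicator_of_notMem ht]
      rw [heqf, MeasureTheory.integral_indicator measurableSet_Icc]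
    · rw [Set.indicator_of_notMem hs]
      have heqf : (fun t => S.indicator F (t, s)) = fun _ => (0 : ℝ) := by
        funext t
        exact Set.indicator_of_notMem (fun hmem => hs ((hSmem t s).mp hmem).1) _
      rw [heqf, integral_zero]
  calc ∫ s, ∫ t, S.indicator F (t, s)
      = ∫ s, (simplexSet (m + 1)).indicator
          (fun s => ∫ t in Set.Icc 0 (s (Fin.last m)), f (Fin.snoc s t)) s := by
        exact integral_congr_ae (Filter.EventuallyEq.of_eq (funext hinner))
    _ = _ := MeasureTheory.integral_indicator (measurableSet_simplexSet (m + 1))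

lemma sext_last {m : ℕ} (s : Fin (m + 1) → ℝ) : sext (m + 1) s (m + 1) = s (Fin.last m) := by
  unfold sext
  rw [if_neg (by omega), dif_pos (show m + 1 - 1 < m + 1 by omega)]
  rfl

lemma Ifun_congr (α : ℝ) (k : ℕ) {r₁ r₂ : ℕ → ℝ} (h : ∀ ℓ, ℓ ≤ k → r₁ ℓ = r₂ ℓ) :
    Ifun α k r₁ = Ifun α k r₂ := by
  unfold Ifun
  have : ∀ s : Fin k → ℝ, wsum k s r₁ = wsum k s r₂ := by
    intro s
    unfold wsum
    exact Finset.sum_congr rfl fun ℓ hℓ => by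
      rw [h ℓ (by simpa using Nat.lt_succ_iff.mp (Finset.mem_range.mp hℓ))]
  simp only [this]

lemma Ifun_key (m : ℕ) (α : ℝ) (hα : α ≠ 1) (r : ℕ → ℝ) (hr : ∀ ℓ, 0 < r ℓ) :
    (r (m + 2) - r (m + 1)) * Ifun α (m + 2) r
      = (1 / (1 - α)) * (Ifun (α - 1) (m + 1) (Function.update r (m + 1) (r (m + 2)))
          - Ifun (α - 1) (m + 1) r) := by
  have h1α : (1 : ℝ) - α ≠ 0 := sub_ne_zero.mpr (Ne.symm hα)
  by_cases hd : r (m + 2) = r (m + 1)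
  · rw [hd, sub_self, zero_mul, Function.update_eq_self, sub_self, mul_zero]
  · have hdne : r (m + 2) - r (m + 1) ≠ 0 := sub_ne_zero.mpr hd
    set d := r (m + 2) - r (m + 1) with hdd
    set r' := Function.update r (m + 1) (r (m + 2)) with hr'
    have hr'pos : ∀ ℓ, 0 < r' ℓ := by
      intro ℓ
      rw [hr']
      rcases eq_or_ne ℓ (m + 1) with h | h
      · rw [h, Function.update_self]; exact hr _
      · rw [Function.update_of_ne h]; exact hr _
    have key : Ifun α (m + 2) r
        = (Ifun (α - 1) (m + 1) r' - Ifun (α - 1) (m + 1) r) / ((1 - α) * d) := by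
      unfold Ifun
      rw [integral_simplex_snoc m _ (integrableOn_wsum_rpow (m + 2) α hr)]
      have hcongr : Set.EqOn
          (fun s => ∫ t in Set.Icc 0 (s (Fin.last m)), wsum (m + 2) (Fin.snoc s t) r ^ (-α))
          (fun s => ((wsum (m + 1) s r' ^ (-(α - 1)) - wsum (m + 1) s r ^ (-(α - 1)))
            / ((1 - α) * d))) (simplexSet (m + 1)) := by
        intro s hs
        have hc : 0 ≤ s (Fin.last m) := (hs.1 _).1
        have hA : ∀ t, wsum (m + 2) (Fin.snoc s t) r = wsum (m + 1) s r + t * d := by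
          intro t; rw [wsum_snoc]
        have hpos : ∀ t ∈ Set.Icc 0 (s (Fin.last m)), 0 < wsum (m + 1) s r + t * d := by
          intro t ht
          rw [← hA t]
          exact wsum_pos ((snoc_mem_simplex_iff s t).mpr ⟨hs, ht⟩) hr
        simp only [hA]
        rw [inner_eval hα hdne hc hpos]
        have hA' : wsum (m + 1) s r + s (Fin.last m) * d = wsum (m + 1) s r' := by
          rw [hr', wsum_update, sext_last]
        rw [hA', show (1 : ℝ) - α = -(α - 1) by ring]
      rw [setIntegral_congr_fun (measurableSet_simplexSet (m + 1)) hcongr]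
      rw [MeasureTheory.integral_div]
      rw [MeasureTheory.integral_sub (integrableOn_wsum_rpow (m + 1) (α - 1) hr'pos)
        (integrableOn_wsum_rpow (m + 1) (α - 1) hr)]
    rw [key]
    field_simp

section MatrixPart

variable {N : ℕ}

lemma sum_proj (v : Fin N → Fin N → ℂ)
    (horth : ∀ i j, (∑ a, (starRingEnd ℂ) (v i a) * v j a) = if i = j then 1 else 0) :
    ∑ i, projOf N v i = 1 := by
  set V : Mat N := Matrix.of (fun i a => v i a) with hV
  have h1 : V * V.conjTranspose = 1 := by
    ext i j
    simp only [Matrix.mul_apply, Matrix.conjTranspose_apply, hV, Matrix.of_apply,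
      Matrix.one_apply, starRingEnd_apply]
    rw [show (∑ a, v i a * star (v j a)) = ∑ a, (starRingEnd ℂ) (v j a) * v i a from
      Finset.sum_congr rfl fun a _ => by rw [starRingEnd_apply]; ring, horth j i]
    by_cases hij : i = j <;> simp [hij, eq_comm]
  have h2 : V.conjTranspose * V = 1 := mul_eq_one_comm.mp h1
  ext a c
  have h3 : (V.conjTranspose * V) a c = (1 : Mat N) a c := by rw [h2]
  simp only [Matrix.mul_apply, Matrix.conjTranspose_apply, hV, Matrix.of_apply] at h3
  have h4 := congrArg (starRingEnd ℂ) h3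
  simp only [map_sum, map_mul, RingHomCompTriple.comp_apply, Complex.conj_conj] at h4
  calc (∑ i, projOf N v i) a c = ∑ i, v i a * (starRingEnd ℂ) (v i c) := by
        simp [Matrix.sum_apply, projOf]
    _ = (starRingEnd ℂ) ((1 : Mat N) a c) := by
        rw [← h3, map_sum]
        exact Finset.sum_congr rfl fun i _ => by
          rw [map_mul, starRingEnd_apply, starRingEnd_apply, star_star]
    _ = (1 : Mat N) a c := by
        by_cases hac : a = c <;> simp [Matrix.one_apply, hac]

lemma h_mul_proj (h : Mat N) (lam : Fin N → ℝ) (v : Fin N → Fin N → ℂ)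
    (heig : ∀ i, h.mulVec (v i) = (lam i : ℂ) • v i) (i : Fin N) :
    h * projOf N v i = lam i • projOf N v i := by
  ext a c
  have h1 := congrFun (heig i) a
  simp only [Matrix.mulVec, dotProduct, Pi.smul_apply, smul_eq_mul] at h1
  simp only [Matrix.mul_apply, projOf, Matrix.of_apply, Matrix.smul_apply]
  calc ∑ x, h a x * (v i x * (starRingEnd ℂ) (v i c))
      = (∑ x, h a x * v i x) * (starRingEnd ℂ) (v i c) := by
        rw [Finset.sum_mul]; exact Finset.sum_congr rfl fun x _ => by ring
    _ = ((lam i : ℂ) * v i a) * (starRingEnd ℂ) (v i c) := by rw [h1]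
    _ = (lam i : ℝ) • (v i a * (starRingEnd ℂ) (v i c)) := by
        rw [Complex.real_smul]; ring

lemma proj_mul_h (h : Mat N) (hherm : h.IsHermitian) (lam : Fin N → ℝ)
    (v : Fin N → Fin N → ℂ)
    (heig : ∀ i, h.mulVec (v i) = (lam i : ℂ) • v i) (i : Fin N) :
    projOf N v i * h = lam i • projOf N v i := by
  ext a c
  have h1 := congrFun (heig i) c
  simp only [Matrix.mulVec, dotProduct, Pi.smul_apply, smul_eq_mul] at h1
  have hherm' : ∀ x y, h x y = (starRingEnd ℂ) (h y x) := by
    intro x y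
    conv_lhs => rw [← hherm]
    rfl
  simp only [Matrix.mul_apply, projOf, Matrix.of_apply, Matrix.smul_apply]
  calc ∑ x, (v i a * (starRingEnd ℂ) (v i x)) * h x c
      = v i a * (starRingEnd ℂ) (∑ x, h c x * v i x) := by
        rw [map_sum, Finset.mul_sum]
        exact Finset.sum_congr rfl fun x _ => by
          rw [hherm' x c, map_mul]; ring
    _ = v i a * (starRingEnd ℂ) ((lam i : ℂ) * v i c) := by rw [h1]
    _ = (lam i : ℝ) • (v i a * (starRingEnd ℂ) (v i c)) := by
        rw [map_mul, Complex.conj_ofReal, Complex.real_smul]; ring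

end MatrixPart

section ChainPart

variable {N : ℕ}

lemma chain_zero (P : Fin N → Mat N) (b : ℕ → Mat N) (idx : Fin 1 → Fin N) :
    chain N 0 P b idx = P (idx 0) := by
  simp [chain]

lemma chain_succ (m : ℕ) (P : Fin N → Mat N) (b : ℕ → Mat N)
    (idx : Fin (m + 2) → Fin N) :
    chain N (m + 1) P b idx
      = chain N m P b (fun i => idx i.castSucc) * (b (m + 1) * P (idx (Fin.last (m + 1)))) := by
  have hlist : (List.ofFn fun j : Fin (m + 1) => b (j.1 + 1) * P (idx j.succ))
      = (List.ofFn fun j : Fin m =>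
          b (j.1 + 1) * P ((fun i => idx i.castSucc) j.succ)).concat
        (b (m + 1) * P (idx (Fin.last (m + 1)))) := by
    rw [List.ofFn_succ']
    congr 1
  unfold chain
  rw [hlist, List.concat_eq_append, List.prod_append]
  simp only [List.prod_cons, List.prod_nil, mul_one]
  have h0 : idx (Fin.castSucc 0) = idx 0 := by rw [Fin.castSucc_zero]
  rw [← mul_assoc, h0]

lemma chain_congr (m : ℕ) (P : Fin N → Mat N) (b₁ b₂ : ℕ → Mat N)
    (idx : Fin (m + 1) → Fin N) (hb : ∀ j, 1 ≤ j → j ≤ m → b₁ j = b₂ j) :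
    chain N m P b₁ idx = chain N m P b₂ idx := by
  unfold chain
  have : (fun j : Fin m => b₁ (j.1 + 1) * P (idx j.succ))
      = (fun j : Fin m => b₂ (j.1 + 1) * P (idx j.succ)) :=
    funext fun j => by rw [hb (j.1 + 1) (by omega) (by omega)]
  rw [this]

lemma chain_mul_h (m : ℕ) (P : Fin N → Mat N) (b : ℕ → Mat N) (h : Mat N)
    (lam : Fin N → ℝ) (hP : ∀ i, P i * h = lam i • P i) (idx : Fin (m + 1) → Fin N) :
    chain N m P b idx * h = lam (idx (Fin.last m)) • chain N m P b idx := by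
  cases m with
  | zero =>
    rw [chain_zero]
    have : Fin.last 0 = (0 : Fin 1) := rfl
    rw [this]
    exact hP (idx 0)
  | succ m =>
    rw [chain_succ, mul_assoc, mul_assoc, hP, Matrix.mul_smul, Matrix.mul_smul,
      ← Matrix.mul_smul]

lemma sum_pi_snoc {M : ℕ} (F : (Fin (M + 1) → Fin N) → Mat N) :
    ∑ idx : Fin (M + 1) → Fin N, F idx
      = ∑ g : Fin M → Fin N, ∑ x : Fin N, F (Fin.snoc g x) := by
  let e : (Fin M → Fin N) × Fin N ≃ (Fin (M + 1) → Fin N) :=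
    { toFun := fun p => Fin.snoc p.1 p.2
      invFun := fun f => (fun i => f i.castSucc, f (Fin.last M))
      left_inv := fun p => by
        simp [Fin.snoc_castSucc, Fin.snoc_last, Prod.mk.injEq]
      right_inv := fun f => by
        funext i
        refine Fin.lastCases ?_ (fun i => ?_) i <;> simp }
  rw [show (∑ idx : Fin (M + 1) → Fin N, F idx)
      = ∑ p : (Fin M → Fin N) × Fin N, F (Fin.snoc p.1 p.2) from
    (Fintype.sum_equiv e (fun p => F (Fin.snoc p.1 p.2)) F fun p => rfl).symm,
    Fintype.sum_prod_type]

end ChainPart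

section Assembly

variable {N : ℕ}

lemma lamOf_snoc_lt {M : ℕ} (lam : Fin N → ℝ) (g : Fin (M + 1) → Fin N) (y : Fin N)
    {ℓ : ℕ} (hℓ : ℓ < M + 1) :
    lamOf N (M + 1) lam (Fin.snoc g y) ℓ = lamOf N M lam g ℓ := by
  unfold lamOf
  rw [dif_pos (show ℓ < M + 2 by omega), dif_pos hℓ]
  have : (⟨ℓ, show ℓ < M + 2 by omega⟩ : Fin (M + 2))
      = Fin.castSucc ⟨ℓ, hℓ⟩ := rfl
  rw [this, Fin.snoc_castSucc]

lemma lamOf_snoc_top {M : ℕ} (lam : Fin N → ℝ) (g : Fin (M + 1) → Fin N) (y : Fin N) :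
    lamOf N (M + 1) lam (Fin.snoc g y) (M + 1) = lam y := by
  unfold lamOf
  rw [dif_pos (show M + 1 < M + 2 by omega)]
  have : (⟨M + 1, show M + 1 < M + 2 by omega⟩ : Fin (M + 2)) = Fin.last (M + 1) := rfl
  rw [this, Fin.snoc_last]

lemma lamOf_pos {M : ℕ} (lam : Fin N → ℝ) (hlam : ∀ i, 0 < lam i)
    (idx : Fin (M + 1) → Fin N) (ℓ : ℕ) : 0 < lamOf N M lam idx ℓ := by
  unfold lamOf
  split_ifs
  · exact hlam _
  · exact one_pos

lemma sum_pi_snoc2 {M : ℕ} (F : (Fin (M + 2) → Fin N) → Mat N) :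
    ∑ idx : Fin (M + 2) → Fin N, F idx
      = ∑ g : Fin M → Fin N, ∑ x : Fin N, ∑ y : Fin N,
          F (Fin.snoc (Fin.snoc g x) y) := by
  rw [sum_pi_snoc (F := F), sum_pi_snoc (F := fun g' => ∑ y, F (Fin.snoc g' y))]

lemma snoc_comp_castSucc {M : ℕ} {β : Type*} (g : Fin (M + 1) → β) (y : β) :
    (fun i : Fin (M + 1) => (Fin.snoc g y : Fin (M + 2) → β) i.castSucc) = g := by
  funext i
  rw [Fin.snoc_castSucc]

end Assembly

/-- commutator in the last slot. -/
theorem Xop_commutator_last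
    (N : ℕ) (hN : 1 ≤ N) (h : Mat N) (hpd : h.PosDef)
    (lam : Fin N → ℝ) (v : Fin N → Fin N → ℂ) (hlam : ∀ i, 0 < lam i)
    (horth : ∀ i j, (∑ a, (starRingEnd ℂ) (v i a) * v j a) = if i = j then 1 else 0)
    (heig : ∀ i, h.mulVec (v i) = (lam i : ℂ) • v i)
    (α : ℝ) (hα : α ≠ 1) (k : ℕ) (hk : 2 ≤ k) (b : ℕ → Mat N) :
    Xop N lam (projOf N v) α k (fun j => if j = k then b k * h - h * b k else b j)
      = (1 / (1 - α)) •
          (Xop N lam (projOf N v) (α - 1) (k - 1)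
              (fun m => if m = k - 1 then b (k - 1) * b k else b m)
            - Xop N lam (projOf N v) (α - 1) (k - 1) b * b k) := by
  obtain ⟨n, rfl⟩ : ∃ n, k = n + 2 := ⟨k - 2, by omega⟩
  simp only [show n + 2 - 1 = n + 1 from rfl]
  set P := projOf N v with hPdef
  have hsum : ∑ i, P i = 1 := sum_proj v horth
  have hPh : ∀ i, P i * h = lam i • P i := proj_mul_h h hpd.1 lam v heig
  have hhP : ∀ i, h * P i = lam i • P i := h_mul_proj h lam v heig
  set b' : ℕ → Mat N := fun j => if j = n + 2 then b (n + 2) * h - h * b (n + 2) else b j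
    with hb'
  set b'' : ℕ → Mat N := fun m => if m = n + 1 then b (n + 1) * b (n + 2) else b m with hb''
  -- commutator identity at the chain level
  have hb'chain : ∀ idx : Fin (n + 3) → Fin N,
      chain N (n + 2) P b' idx
        = (lam (idx (Fin.last (n + 2))) - lam (idx ((Fin.last (n + 1)).castSucc))) •
            chain N (n + 2) P b idx := by
    intro idx
    set C := chain N (n + 1) P b (fun i => idx i.castSucc) with hC
    set y := idx (Fin.last (n + 2)) with hy
    set x' := idx ((Fin.last (n + 1)).castSucc) with hx'
    have hcsub : chain N (n + 1) P b' (fun i => idx i.castSucc) = C := by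
      rw [hC]
      exact chain_congr _ P b' b _ fun j h1 h2 => by
        simp only [hb']
        rw [if_neg (by omega)]
    have hstep : chain N (n + 2) P b' idx = C * (b' (n + 2) * P y) := by
      rw [chain_succ, hcsub]
    have hb'last : b' (n + 2) = b (n + 2) * h - h * b (n + 2) := by
      simp [hb']
    have hchainb : chain N (n + 2) P b idx = C * (b (n + 2) * P y) := by
      rw [chain_succ, hC]
    have hCh : C * h = lam x' • C := by
      rw [hC, hx']
      exact chain_mul_h (n + 1) P b h lam hPh _
    rw [hstep, hb'last, hchainb]
    calc C * ((b (n + 2) * h - h * b (n + 2)) * P y)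
        = C * (b (n + 2) * (h * P y)) - C * (h * (b (n + 2) * P y)) := by
          rw [sub_mul, mul_sub, mul_assoc, mul_assoc]
      _ = lam y • (C * (b (n + 2) * P y)) - (C * h) * (b (n + 2) * P y) := by
          rw [hhP y, mul_smul_comm, mul_smul_comm, ← mul_assoc, ← mul_assoc]
      _ = lam y • (C * (b (n + 2) * P y)) - lam x' • (C * (b (n + 2) * P y)) := by
          rw [hCh, smul_mul_assoc]
      _ = (lam y - lam x') • (C * (b (n + 2) * P y)) := (sub_smul _ _ _).symm
  -- rewrite LHS using the scalar key identity
  have hLHS : Xop N lam P α (n + 2) b'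
      = ∑ idx : Fin (n + 3) → Fin N,
          ((1 / (1 - α)) *
            (Ifun (α - 1) (n + 1)
                (Function.update (lamOf N (n + 2) lam idx) (n + 1)
                  (lamOf N (n + 2) lam idx (n + 2)))
              - Ifun (α - 1) (n + 1) (lamOf N (n + 2) lam idx))) •
            chain N (n + 2) P b idx := by
    unfold Xop
    refine Finset.sum_congr rfl fun idx _ => ?_
    rw [hb'chain idx, smul_smul]
    congr 1
    have hxy : lam (idx (Fin.last (n + 2))) = lamOf N (n + 2) lam idx (n + 2) := by
      unfold lamOf
      rw [dif_pos (show n + 2 < n + 3 by omega)]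
      rfl
    have hx'2 : lam (idx ((Fin.last (n + 1)).castSucc)) = lamOf N (n + 2) lam idx (n + 1) := by
      unfold lamOf
      rw [dif_pos (show n + 1 < n + 3 by omega)]
      rfl
    rw [mul_comm, hxy, hx'2]
    exact Ifun_key n α hα _ (lamOf_pos lam hlam idx)
  rw [hLHS]
  -- split into the two sums
  have hsplit : (∑ idx : Fin (n + 3) → Fin N,
        ((1 / (1 - α)) *
          (Ifun (α - 1) (n + 1)
              (Function.update (lamOf N (n + 2) lam idx) (n + 1)
                (lamOf N (n + 2) lam idx (n + 2)))
            - Ifun (α - 1) (n + 1) (lamOf N (n + 2) lam idx))) •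
          chain N (n + 2) P b idx)
      = (1 / (1 - α)) •
          ((∑ idx : Fin (n + 3) → Fin N,
              Ifun (α - 1) (n + 1)
                (Function.update (lamOf N (n + 2) lam idx) (n + 1)
                  (lamOf N (n + 2) lam idx (n + 2))) • chain N (n + 2) P b idx)
            - ∑ idx : Fin (n + 3) → Fin N,
                Ifun (α - 1) (n + 1) (lamOf N (n + 2) lam idx) • chain N (n + 2) P b idx) := by
    rw [← Finset.sum_sub_distrib, Finset.smul_sum]
    refine Finset.sum_congr rfl fun idx _ => ?_
    rw [mul_smul, sub_smul]
  rw [hsplit]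
  congr 1
  congr 1
  -- first sum = Xop with merged last factors
  · rw [sum_pi_snoc2]
    unfold Xop
    rw [sum_pi_snoc (F := fun jdx => Ifun (α - 1) (n + 1) (lamOf N (n + 1) lam jdx) •
      chain N (n + 1) P b'' jdx)]
    refine Finset.sum_congr rfl fun g _ => ?_
    have hcoef : ∀ x y : Fin N,
        Ifun (α - 1) (n + 1)
            (Function.update (lamOf N (n + 2) lam (Fin.snoc (Fin.snoc g x) y)) (n + 1)
              (lamOf N (n + 2) lam (Fin.snoc (Fin.snoc g x) y) (n + 2)))
          = Ifun (α - 1) (n + 1) (lamOf N (n + 1) lam (Fin.snoc g y)) := by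
      intro x y
      refine Ifun_congr _ _ fun ℓ hℓ => ?_
      rcases eq_or_ne ℓ (n + 1) with heq | hne
      · subst heq
        rw [Function.update_self, lamOf_snoc_top, lamOf_snoc_top]
      · have hℓ' : ℓ < n + 1 := by omega
        rw [Function.update_of_ne hne, lamOf_snoc_lt lam _ y (by omega),
          lamOf_snoc_lt lam _ x hℓ', lamOf_snoc_lt lam _ y hℓ']
    have hch : ∀ x y : Fin N,
        chain N (n + 2) P b (Fin.snoc (Fin.snoc g x) y)
          = (chain N n P b g * (b (n + 1) * P x)) * (b (n + 2) * P y) := by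
      intro x y
      rw [chain_succ, snoc_comp_castSucc, Fin.snoc_last, chain_succ, snoc_comp_castSucc,
        Fin.snoc_last]
    have hch'' : ∀ y : Fin N,
        chain N (n + 1) P b'' (Fin.snoc g y)
          = chain N n P b g * ((b (n + 1) * b (n + 2)) * P y) := by
      intro y
      rw [chain_succ, snoc_comp_castSucc, Fin.snoc_last,
        chain_congr n P b'' b g fun j h1 h2 => by simp only [hb'']; rw [if_neg (by omega)],
        show b'' (n + 1) = b (n + 1) * b (n + 2) by simp [hb'']]
    simp only [hcoef, hch, hch'']
    rw [Finset.sum_comm]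
    refine Finset.sum_congr rfl fun y _ => ?_
    rw [← Finset.smul_sum]
    congr 1
    calc ∑ x : Fin N, (chain N n P b g * (b (n + 1) * P x)) * (b (n + 2) * P y)
        = (chain N n P b g * (b (n + 1) * (∑ x : Fin N, P x))) * (b (n + 2) * P y) := by
          rw [Finset.mul_sum, Finset.mul_sum, Finset.sum_mul]
      _ = chain N n P b g * ((b (n + 1) * b (n + 2)) * P y) := by
          rw [hsum, mul_one]
          simp only [mul_assoc]
  -- second sum = Xop * b k
  · rw [sum_pi_snoc]
    unfold Xop
    rw [Finset.sum_mul]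
    refine Finset.sum_congr rfl fun g _ => ?_
    have hcoef : ∀ y : Fin N,
        Ifun (α - 1) (n + 1) (lamOf N (n + 2) lam (Fin.snoc g y))
          = Ifun (α - 1) (n + 1) (lamOf N (n + 1) lam g) := by
      intro y
      refine Ifun_congr _ _ fun ℓ hℓ => ?_
      exact lamOf_snoc_lt lam g y (by omega)
    have hch : ∀ y : Fin N,
        chain N (n + 2) P b (Fin.snoc g y)
          = chain N (n + 1) P b g * (b (n + 2) * P y) := by
      intro y
      rw [chain_succ, snoc_comp_castSucc, Fin.snoc_last]
    simp only [hcoef, hch]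
    calc ∑ y : Fin N, Ifun (α - 1) (n + 1) (lamOf N (n + 1) lam g) •
          (chain N (n + 1) P b g * (b (n + 2) * P y))
        = Ifun (α - 1) (n + 1) (lamOf N (n + 1) lam g) •
            (chain N (n + 1) P b g * (b (n + 2) * (∑ y : Fin N, P y))) := by
          rw [Finset.mul_sum, Finset.mul_sum, Finset.smul_sum]
      _ = (Ifun (α - 1) (n + 1) (lamOf N (n + 1) lam g) • chain N (n + 1) P b g) * b (n + 2) := by
          rw [hsum, mul_one, smul_mul_assoc]

end
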